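/- The following intersections are nonempty: (i) for all i, j ∈ {0, …, p−1} with i ≤ p−2, j ≠ i and j ≠ i+1, one has f_{i,j}(T_ε) ∩ f_{i+1,j}(T_ε) ≠ ∅; (ii) for all i, j ∈ {0, …, p−1} with j ≤ p−2, i ≠ j and i ≠ j+1, one has f_{i,j}(T_ε) ∩ f_{i,j+1}(T_ε) ≠ ∅; (iii) for all i ∈ {0, …, p−2}, one has f_{i+1,i}(T_ε) ∩ f_{i,i+1}(T_ε) ≠ ∅ and f_{i,i}(T_ε) ∩ f_{i+1,i+1}(T_ε) ≠ ∅. -/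

import Mathlib

/-
For every digit `d ∈ D_ε` the constant digit sequence shows that the fixed point
`d / (p - 1)` of `z ↦ (z + d) / p` lies in `T_ε`. Writing `f_{i,j}(z) = (z + d_{i,j}) / p`,
two pieces `f_{i,j}(T_ε)` and `f_{i',j'}(T_ε)` meet as soon as `z + d_{i,j} = w + d_{i',j'}` for
some `z, w ∈ T_ε`, and in each case such `z, w` can be taken among these fixed points: the two
opposite corners `(1, 1/(p-1))` and `(0, 1/(p-1))` for horizontal neighbours (symmetrically for
vertical ones), `(0, 1)` and `(1, 0)` for the anti-diagonal pair, and
`(1, 1) + ε/(p-1) (1, 1)` and `ε/(p-1) (1, 1)` for the diagonal pair.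
-/

noncomputable section

/-- The digit set `D_ε = {(i + δ_{ij} ε, j + δ_{ij} ε) : i, j ∈ {0, …, |p|-1}}`. -/
def Ddiag (p : ℤ) (ε : ℝ) : Set (ℝ × ℝ) :=
  {d | ∃ i j : ℤ, 0 ≤ i ∧ i ≤ |p| - 1 ∧ 0 ≤ j ∧ j ≤ |p| - 1 ∧
      d = ((i : ℝ) + (if i = j then ε else 0), (j : ℝ) + (if i = j then ε else 0))}

/-- The self-similar set `T_ε = {∑_{k=1}^∞ p^{-k} d_k : d_k ∈ D_ε}`. -/
def Tdiag (p : ℤ) (ε : ℝ) : Set (ℝ × ℝ) :=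
  {z | ∃ d : ℕ → ℝ × ℝ, (∀ k, d k ∈ Ddiag p ε) ∧
      z = ∑' k : ℕ, ((p : ℝ) ^ (k + 1))⁻¹ • d k}

/-- The map `f_{i,j}(x, y) = ((x + i + δ_{ij} ε)/p, (y + j + δ_{ij} ε)/p)`. -/
def fdiag (p : ℤ) (ε : ℝ) (i j : ℤ) (z : ℝ × ℝ) : ℝ × ℝ :=
  ((z.1 + (i : ℝ) + (if i = j then ε else 0)) / (p : ℝ),
   (z.2 + (j : ℝ) + (if i = j then ε else 0)) / (p : ℝ))

namespace Tdiag

def digit (ε : ℝ) (i j : ℤ) : ℝ × ℝ :=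
  ((i : ℝ) + (if i = j then ε else 0), (j : ℝ) + (if i = j then ε else 0))

theorem digit_of_ne (ε : ℝ) {i j : ℤ} (h : i ≠ j) : digit ε i j = ((i : ℝ), (j : ℝ)) := by
  simp [digit, h]

theorem digit_self (ε : ℝ) (i : ℤ) : digit ε i i = ((i : ℝ) + ε, (i : ℝ) + ε) := by
  simp [digit]

theorem digit_mem_Ddiag {p : ℤ} (hp : 0 ≤ p) (ε : ℝ) {i j : ℤ} (hi : 0 ≤ i) (hi' : i ≤ p - 1)
    (hj : 0 ≤ j) (hj' : j ≤ p - 1) : digit ε i j ∈ Ddiag p ε :=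
  ⟨i, j, hi, by rwa [abs_of_nonneg hp], hj, by rwa [abs_of_nonneg hp], rfl⟩

theorem fdiag_eq_smul (p : ℤ) (ε : ℝ) (i j : ℤ) (z : ℝ × ℝ) :
    fdiag p ε i j z = (p : ℝ)⁻¹ • (z + digit ε i j) := by
  ext <;> simp only [fdiag, digit, Prod.smul_fst, Prod.smul_snd, Prod.fst_add, Prod.snd_add,
    smul_eq_mul] <;> ring

theorem hasSum_inv_pow_succ {r : ℝ} (hr : 1 < |r|) :
    HasSum (fun k : ℕ => (r ^ (k + 1))⁻¹) (r - 1)⁻¹ := by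
  have hr0 : r ≠ 0 := abs_pos.1 (by linarith)
  have hr1 : r - 1 ≠ 0 := sub_ne_zero.2 fun h => by simp [h] at hr
  have hgeom := (hasSum_geometric_of_abs_lt_one
    (by rwa [abs_inv, inv_lt_one_iff₀, or_iff_right (not_le.2 (by linarith))])).mul_right r⁻¹
  have hsum : (r - 1)⁻¹ = (1 - r⁻¹)⁻¹ * r⁻¹ := by field_simp
  have hterm : (fun k : ℕ => (r ^ (k + 1))⁻¹) = fun k => r⁻¹ ^ k * r⁻¹ := by
    ext k; rw [pow_succ, mul_inv, inv_pow]
  rwa [hsum, hterm]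

theorem smul_mem_Tdiag_of_mem_Ddiag {p : ℤ} (hp : 1 < p) (ε : ℝ) {d : ℝ × ℝ}
    (hd : d ∈ Ddiag p ε) : ((p : ℝ) - 1)⁻¹ • d ∈ Tdiag p ε :=
  ⟨fun _ => d, fun _ => hd,
    ((hasSum_inv_pow_succ (lt_abs.2 (.inl (by exact_mod_cast hp)))).smul_const d).tsum_eq.symm⟩

theorem smul_digit_mem_Tdiag {p : ℤ} (hp : 1 < p) (ε : ℝ) (i j : ℤ) (hi : 0 ≤ i)
    (hi' : i ≤ p - 1) (hj : 0 ≤ j) (hj' : j ≤ p - 1) :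
    ((p : ℝ) - 1)⁻¹ • digit ε i j ∈ Tdiag p ε :=
  smul_mem_Tdiag_of_mem_Ddiag hp ε (digit_mem_Ddiag (by omega) ε hi hi' hj hj')

theorem image_fdiag_inter_nonempty {p : ℤ} {ε : ℝ} {S : Set (ℝ × ℝ)} {i j i' j' : ℤ}
    {z w : ℝ × ℝ} (hz : z ∈ S) (hw : w ∈ S) (h : z + digit ε i j = w + digit ε i' j') :
    (fdiag p ε i j '' S ∩ fdiag p ε i' j' '' S).Nonempty :=
  ⟨_, ⟨z, hz, rfl⟩, w, hw, by rw [fdiag_eq_smul, fdiag_eq_smul, h]⟩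

end Tdiag

open Tdiag in
/-- (i) if `j ≠ i, i+1` then `f_{i,j}(T_ε) ∩ f_{i+1,j}(T_ε) ≠ ∅`;
(ii) if `i ≠ j, j+1` then `f_{i,j}(T_ε) ∩ f_{i,j+1}(T_ε) ≠ ∅`;
(iii) for `0 ≤ i ≤ p-2`, `f_{i+1,i}(T_ε) ∩ f_{i,i+1}(T_ε) ≠ ∅` and
`f_{i,i}(T_ε) ∩ f_{i+1,i+1}(T_ε) ≠ ∅`. -/
theorem stmt18 (p : ℤ) (hp : 2 < p) (ε : ℝ) :
    (∀ i j : ℤ, 0 ≤ i → i ≤ p - 2 → 0 ≤ j → j ≤ p - 1 → j ≠ i → j ≠ i + 1 →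
      (fdiag p ε i j '' Tdiag p ε ∩ fdiag p ε (i + 1) j '' Tdiag p ε).Nonempty) ∧
    (∀ i j : ℤ, 0 ≤ i → i ≤ p - 1 → 0 ≤ j → j ≤ p - 2 → i ≠ j → i ≠ j + 1 →
      (fdiag p ε i j '' Tdiag p ε ∩ fdiag p ε i (j + 1) '' Tdiag p ε).Nonempty) ∧
    (∀ i : ℤ, 0 ≤ i → i ≤ p - 2 →
      (fdiag p ε (i + 1) i '' Tdiag p ε ∩ fdiag p ε i (i + 1) '' Tdiag p ε).Nonempty ∧
      (fdiag p ε i i '' Tdiag p ε ∩ fdiag p ε (i + 1) (i + 1) '' Tdiag p ε).Nonempty) := by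
  have hp' : 1 < p := by omega
  have hp1 : (p : ℝ) - 1 ≠ 0 := sub_ne_zero.2 (by exact_mod_cast hp'.ne')
  refine ⟨fun i j _ _ _ _ hji hji' => ?_, fun i j _ _ _ _ hij hij' => ?_, fun i _ _ => ⟨?_, ?_⟩⟩
  · refine image_fdiag_inter_nonempty
      (smul_digit_mem_Tdiag hp' ε (p - 1) 1 (by omega) le_rfl zero_le_one (by omega))
      (smul_digit_mem_Tdiag hp' ε 0 1 le_rfl (by omega) zero_le_one (by omega)) ?_
    rw [digit_of_ne ε (by omega : p - 1 ≠ 1), digit_of_ne ε (by omega : (0 : ℤ) ≠ 1),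
      digit_of_ne ε hji.symm, digit_of_ne ε hji'.symm]
    ext <;> simp [inv_mul_cancel₀ hp1]
    ring
  · refine image_fdiag_inter_nonempty
      (smul_digit_mem_Tdiag hp' ε 1 (p - 1) zero_le_one (by omega) (by omega) le_rfl)
      (smul_digit_mem_Tdiag hp' ε 1 0 zero_le_one (by omega) le_rfl (by omega)) ?_
    rw [digit_of_ne ε (by omega : 1 ≠ p - 1), digit_of_ne ε (by omega : (1 : ℤ) ≠ 0),
      digit_of_ne ε hij, digit_of_ne ε hij']
    ext <;> simp [inv_mul_cancel₀ hp1]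
    ring
  · refine image_fdiag_inter_nonempty
      (smul_digit_mem_Tdiag hp' ε 0 (p - 1) le_rfl (by omega) (by omega) le_rfl)
      (smul_digit_mem_Tdiag hp' ε (p - 1) 0 (by omega) le_rfl le_rfl (by omega)) ?_
    rw [digit_of_ne ε (by omega : 0 ≠ p - 1), digit_of_ne ε (by omega : p - 1 ≠ 0),
      digit_of_ne ε (by omega : i + 1 ≠ i), digit_of_ne ε (by omega : i ≠ i + 1)]
    ext <;> simp [inv_mul_cancel₀ hp1] <;> ring
  · refine image_fdiag_inter_nonempty
      (smul_digit_mem_Tdiag hp' ε (p - 1) (p - 1) (by omega) le_rfl (by omega) le_rfl)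
      (smul_digit_mem_Tdiag hp' ε 0 0 le_rfl (by omega) le_rfl (by omega)) ?_
    simp only [digit_self]
    ext <;> simp [mul_add, inv_mul_cancel₀ hp1] <;> ring
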